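/- In a skew brace $A$, for all $n \geq 1$: $\mathrm{Ann}_{n-1}(A) = A$ if and only if $\Gamma_n(A) = 1$, where $\Gamma_n$ is the lower central series defined by $\Gamma_1(A)=A$ and $\Gamma_{n+1}(A)=\langle \Gamma_n(A)*A,\ A*\Gamma_n(A),\ [A,\Gamma_n(A)]\rangle$ (subgroup generation and commutator taken in $(A,\cdot)$). -/
import Mathlib


namespace SB

class SkewBrace (A : Type*) extends Group A where
  circ : A → A → A
  sinv : A → A
  circ_assoc : ∀ a b c : A, circ (circ a b) c = circ a (circ b c)
  one_circ : ∀ a : A, circ 1 a = a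
  circ_one : ∀ a : A, circ a 1 = a
  sinv_circ : ∀ a : A, circ (sinv a) a = 1
  circ_sinv : ∀ a : A, circ a (sinv a) = 1
  brace : ∀ a b c : A, circ a (b * c) = circ a b * a⁻¹ * circ a c

open SkewBrace

variable {A : Type*} [SkewBrace A]

/-- The lambda map: `lam a b = a⁻¹ ⬝ (a ∘ b)`. -/
def lam (a b : A) : A := a⁻¹ * circ a b

/-- The star product: `star a b = a⁻¹ ⬝ (a ∘ b) ⬝ b⁻¹`. -/
def star (a b : A) : A := a⁻¹ * circ a b * b⁻¹

/-- For sets X, Y, the subgroup of (A, mul) generated by all star products x * y. -/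
def starSub (X Y : Set A) : Subgroup A :=
  Subgroup.closure {z | ∃ x ∈ X, ∃ y ∈ Y, z = star x y}

/-- The left series: `leftSeries n` is the term A^(n+1), so `leftSeries 0 = A`. -/
def leftSeries : ℕ → Subgroup A
  | 0 => ⊤
  | n + 1 => starSub (Set.univ) ((leftSeries n : Subgroup A) : Set A)

/-- The right series: `rightSeries n` is the term A^((n+1)), so `rightSeries 0 = A`. -/
def rightSeries : ℕ → Subgroup A
  | 0 => ⊤
  | n + 1 => starSub ((rightSeries n : Subgroup A) : Set A) (Set.univ)

/-- The commutator of x and a with respect to the circle operation. -/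
def circCommutator (x a : A) : A := circ (circ (circ x a) (sinv x)) (sinv a)

/-- Internal description of the socle of the quotient by an ideal with underlying set S:
elements x whose class lies in ker(lambda) and in the center of the additive group of the quotient. -/
def socStep (S : Set A) : Set A :=
  {x | ∀ a : A, star x a ∈ S ∧ x * a * x⁻¹ * a⁻¹ ∈ S}

/-- The socle series: Soc_0 = 1, Soc_(n+1)/Soc_n = Soc(A/Soc_n). -/
def socSeries : ℕ → Set A
  | 0 => {1}
  | n + 1 => socStep (socSeries n)

/-- Internal description of the annihilator of the quotient by an ideal with underlying set S. -/
def annStep (S : Set A) : Set A :=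
  {x | ∀ a : A, star x a ∈ S ∧ x * a * x⁻¹ * a⁻¹ ∈ S ∧ circCommutator x a ∈ S}

/-- The annihilator series: Ann_0 = 1, Ann_(n+1)/Ann_n = Ann(A/Ann_n). -/
def annSeries : ℕ → Set A
  | 0 => {1}
  | n + 1 => annStep (annSeries n)

/-- The lower central series of a skew brace: gammaSeries n = Gamma_(n+1)(A). -/
def gammaSeries : ℕ → Subgroup A
  | 0 => ⊤
  | n + 1 =>
    Subgroup.closure
      ({z | ∃ x ∈ gammaSeries n, ∃ a : A, z = star x a} ∪
       {z | ∃ a : A, ∃ x ∈ gammaSeries n, z = star a x} ∪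
       {z | ∃ a : A, ∃ x ∈ gammaSeries n, z = a * x * a⁻¹ * x⁻¹})

/- ### Auxiliary development -/

section Aux

lemma lam_one_right (a : A) : lam a (1 : A) = 1 := by
  simp [lam, circ_one]

lemma circ_eq_mul_lam (a b : A) : circ a b = a * lam a b := by
  simp [lam, mul_assoc]

lemma lam_mul (a b c : A) : lam a (b * c) = lam a b * lam a c := by
  simp [lam, brace a b c, mul_assoc]

lemma lam_one_left (b : A) : lam (1 : A) b = b := by
  simp [lam, one_circ]

lemma lam_inv (a b : A) : lam a b⁻¹ = (lam a b)⁻¹ := by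
  have h := lam_mul a b b⁻¹
  rw [mul_inv_cancel, lam_one_right] at h
  exact eq_inv_of_mul_eq_one_right h.symm

lemma lam_circ (a b c : A) : lam (circ a b) c = lam a (lam b c) := by
  have h1 : circ (circ a b) c = circ a b * lam (circ a b) c := circ_eq_mul_lam _ _
  have h2 : circ a (circ b c) = circ a (b * lam b c) := by rw [← circ_eq_mul_lam]
  rw [brace a b (lam b c)] at h2
  have h3 : circ a b * lam (circ a b) c = circ a b * lam a (lam b c) := by
    rw [← h1, circ_assoc, h2]
    simp [lam, mul_assoc]
  exact mul_left_cancel h3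

lemma sinv_one : (sinv (1 : A)) = 1 := by
  have := circ_one (sinv (1 : A))
  rw [← this, sinv_circ]

lemma lam_sinv_lam (a b : A) : lam (sinv a) (lam a b) = b := by
  rw [← lam_circ, sinv_circ, lam_one_left]

lemma lam_lam_sinv (a b : A) : lam a (lam (sinv a) b) = b := by
  rw [← lam_circ, circ_sinv, lam_one_left]

lemma star_eq (a b : A) : star a b = lam a b * b⁻¹ := by
  simp [star, lam, mul_assoc]

lemma star_one_left (a : A) : star (1 : A) a = 1 := by
  simp [star, one_circ]

/-- Ideal predicate for a set in a skew brace. -/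
structure IsIdeal (S : Set A) : Prop where
  one_mem : (1 : A) ∈ S
  mul_mem : ∀ {x y : A}, x ∈ S → y ∈ S → x * y ∈ S
  inv_mem : ∀ {x : A}, x ∈ S → x⁻¹ ∈ S
  conj_mem : ∀ (a : A) {x : A}, x ∈ S → a * x * a⁻¹ ∈ S
  lam_mem : ∀ (a : A) {x : A}, x ∈ S → lam a x ∈ S
  star_mem : ∀ {x : A}, x ∈ S → ∀ (a : A), star x a ∈ S

/-- Congruence modulo a set. -/
def cong (S : Set A) (x y : A) : Prop := x * y⁻¹ ∈ S

namespace IsIdeal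

variable {S : Set A} (h : IsIdeal S)

include h

lemma cong_refl (x : A) : cong S x x := by simp [cong, h.one_mem]

lemma cong_symm {x y : A} (hx : cong S x y) : cong S y x := by
  have := h.inv_mem hx
  simpa [cong] using this

lemma cong_trans {x y z : A} (h1 : cong S x y) (h2 : cong S y z) : cong S x z := by
  have := h.mul_mem h1 h2
  simpa [cong, mul_assoc] using this

lemma cong_mul {x y x' y' : A} (h1 : cong S x x') (h2 : cong S y y') :
    cong S (x * y) (x' * y') := by
  have hc : x * (y * y'⁻¹) * x⁻¹ ∈ S := h.conj_mem x h2
  have := h.mul_mem hc h1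
  have e : x * (y * y'⁻¹) * x⁻¹ * (x * x'⁻¹) = x * y * (x' * y')⁻¹ := by
    group
  rw [e] at this
  exact this

lemma cong_inv {x y : A} (h1 : cong S x y) : cong S x⁻¹ y⁻¹ := by
  have hc : x⁻¹ * (x * y⁻¹) * x⁻¹⁻¹ ∈ S := h.conj_mem x⁻¹ h1
  have := h.inv_mem hc
  have e : (x⁻¹ * (x * y⁻¹) * x⁻¹⁻¹)⁻¹ = x⁻¹ * (y⁻¹)⁻¹ := by group
  rw [e] at this
  exact this

lemma mem_of_cong {x y : A} (h1 : cong S x y) (h2 : y ∈ S) : x ∈ S := by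
  have := h.mul_mem h1 h2
  simpa [mul_assoc] using this

omit h in
lemma cong_one_iff {x : A} : cong S x 1 ↔ x ∈ S := by simp [cong]

lemma cong_circ_right (a : A) {y y' : A} (h1 : cong S y y') :
    cong S (circ a y) (circ a y') := by
  have hy : y = (y * y'⁻¹) * y' := by group
  have e : circ a y * (circ a y')⁻¹ = a * lam a (y * y'⁻¹) * a⁻¹ := by
    conv_lhs => rw [hy]
    rw [brace]
    simp only [lam]
    group
  rw [cong, e]
  exact h.conj_mem a (h.lam_mem a h1)

lemma cong_circ_left {x x' : A} (b : A) (h1 : cong S x x') :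
    cong S (circ x b) (circ x' b) := by
  -- x = x' * s₂ with s₂ ∈ S
  set s₂ : A := x'⁻¹ * (x * x'⁻¹) * x'⁻¹⁻¹ with hs₂
  have hs₂S : s₂ ∈ S := h.conj_mem x'⁻¹ h1
  have hx : x = x' * s₂ := by rw [hs₂]; group
  set u : A := lam (sinv x') s₂ with hu
  have huS : u ∈ S := h.lam_mem _ hs₂S
  have hxu : x = circ x' u := by
    rw [circ_eq_mul_lam, hu, lam_lam_sinv, hx]
  set v : A := u * star u b with hv
  have hvS : v ∈ S := h.mul_mem huS (h.star_mem huS b)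
  have hub : circ u b = v * b := by
    rw [circ_eq_mul_lam, hv, star_eq]; group
  have : circ x b = circ x' v * x'⁻¹ * circ x' b := by
    rw [hxu, circ_assoc, hub, brace]
  have e : circ x b * (circ x' b)⁻¹ = x' * lam x' v * x'⁻¹ := by
    rw [this]; simp [lam, mul_assoc]
  rw [cong, e]
  exact h.conj_mem x' (h.lam_mem x' hvS)

lemma cong_circ {x x' y y' : A} (h1 : cong S x x') (h2 : cong S y y') :
    cong S (circ x y) (circ x' y') :=
  h.cong_trans (h.cong_circ_left y h1) (h.cong_circ_right x' h2)

lemma cong_sinv {x y : A} (h1 : cong S x y) : cong S (sinv x) (sinv y) := by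
  have a1 : cong S (1 : A) (circ (sinv x) y) := by
    have := h.cong_circ_right (sinv x) h1
    rw [sinv_circ] at this
    exact this
  have a2 : cong S (circ (1 : A) (sinv y)) (circ (circ (sinv x) y) (sinv y)) :=
    h.cong_circ_left (sinv y) a1
  rw [one_circ, circ_assoc, circ_sinv, circ_one] at a2
  exact h.cong_symm a2

lemma cong_lam {x x' y y' : A} (h1 : cong S x x') (h2 : cong S y y') :
    cong S (lam x y) (lam x' y') := by
  unfold lam
  exact h.cong_mul (h.cong_inv h1) (h.cong_circ h1 h2)

lemma cong_star {x x' y y' : A} (h1 : cong S x x') (h2 : cong S y y') :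
    cong S (star x y) (star x' y') := by
  unfold star
  exact h.cong_mul (h.cong_mul (h.cong_inv h1) (h.cong_circ h1 h2)) (h.cong_inv h2)

lemma cong_circComm {x x' y y' : A} (h1 : cong S x x') (h2 : cong S y y') :
    cong S (circCommutator x y) (circCommutator x' y') := by
  unfold circCommutator
  exact h.cong_circ (h.cong_circ (h.cong_circ h1 h2) (h.cong_sinv h1)) (h.cong_sinv h2)

end IsIdeal

end Aux


section Aux2

lemma cong_one_iff' {S : Set A} {x : A} : cong S x 1 ↔ x ∈ S := by simp [cong]

lemma lam_cong_of_star {S : Set A} {x a : A} (hs : star x a ∈ S) : cong S (lam x a) a := by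
  rw [cong, ← star_eq]; exact hs

lemma comm_cong {S : Set A} {x a : A} (hb : x * a * x⁻¹ * a⁻¹ ∈ S) :
    cong S (x * a) (a * x) := by
  rw [cong]
  have e : (x * a) * (a * x)⁻¹ = x * a * x⁻¹ * a⁻¹ := by group
  rw [e]; exact hb

lemma mem_annStep {S : Set A} {x : A} :
    x ∈ annStep S ↔
      ∀ a : A, star x a ∈ S ∧ x * a * x⁻¹ * a⁻¹ ∈ S ∧ circCommutator x a ∈ S :=
  Iff.rfl

namespace IsIdeal

variable {S : Set A} (h : IsIdeal S)

include h

lemma cong_of_mul_left (a : A) {u v : A} (hc : cong S (a * u) (a * v)) : cong S u v := by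
  have hm := h.conj_mem a⁻¹ hc
  have e : a⁻¹ * ((a * u) * (a * v)⁻¹) * a⁻¹⁻¹ = u * v⁻¹ := by group
  rw [e] at hm
  exact hm

lemma circ_cong_mul {x : A} (ha : ∀ a, star x a ∈ S) (b : A) :
    cong S (circ x b) (x * b) := by
  rw [circ_eq_mul_lam]
  exact h.cong_mul (h.cong_refl x) (lam_cong_of_star (ha b))

/-- P1: from the annStep conditions, `star a x ∈ S`. -/
lemma star_right_mem {x : A}
    (ha : ∀ a, star x a ∈ S) (hb : ∀ a, x * a * x⁻¹ * a⁻¹ ∈ S)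
    (hc : ∀ a, circCommutator x a ∈ S) (a : A) : star a x ∈ S := by
  have s2 : cong S (circ x a) (circ a x) := by
    have c0 : cong S (circCommutator x a) 1 := cong_one_iff'.2 (hc a)
    have c1 : cong S (circ (circCommutator x a) a) (circ 1 a) := h.cong_circ_left a c0
    rw [one_circ] at c1
    have c2 : cong S (circ (circ (circCommutator x a) a) x) (circ a x) :=
      h.cong_circ_left x c1
    have e : circ (circ (circCommutator x a) a) x = circ x a := by
      unfold circCommutator
      rw [circ_assoc (circ (circ x a) (sinv x)) (sinv a) a, sinv_circ a, circ_one,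
        circ_assoc (circ x a) (sinv x) x, sinv_circ x, circ_one]
    rw [e] at c2
    exact c2
  have s3 : cong S (circ a x) (a * x) :=
    h.cong_trans (h.cong_symm s2)
      (h.cong_trans (h.circ_cong_mul ha a) (comm_cong (hb a)))
  rw [circ_eq_mul_lam] at s3
  have s4 : cong S (lam a x) x := h.cong_of_mul_left a s3
  rw [star_eq]
  exact s4

/-- P2: from the socle conditions plus `star a x ∈ S`, the circ commutator lies in S. -/
lemma circComm_mem {x : A}
    (ha : ∀ a, star x a ∈ S) (hb : ∀ a, x * a * x⁻¹ * a⁻¹ ∈ S)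
    (hd : ∀ a, star a x ∈ S) (a : A) : circCommutator x a ∈ S := by
  have c1 : cong S (circ a x) (a * x) := by
    rw [circ_eq_mul_lam]
    exact h.cong_mul (h.cong_refl a) (lam_cong_of_star (hd a))
  have s1 : cong S (circ a x) (circ x a) :=
    h.cong_trans c1 (h.cong_trans (h.cong_symm (comm_cong (hb a)))
      (h.cong_symm (h.circ_cong_mul ha a)))
  have s2 : cong S (circCommutator x a) (circ (circ (circ a x) (sinv x)) (sinv a)) := by
    unfold circCommutator
    exact h.cong_circ_left (sinv a) (h.cong_circ_left (sinv x) (h.cong_symm s1))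
  have e : circ (circ (circ a x) (sinv x)) (sinv a) = 1 := by
    rw [circ_assoc a x (sinv x), circ_sinv x, circ_one, circ_sinv a]
  rw [e] at s2
  exact cong_one_iff'.1 s2

lemma annStep_congr {u v : A} (huv : cong S u v) (hv : v ∈ annStep S) :
    u ∈ annStep S := by
  intro a
  obtain ⟨h1, h2, h3⟩ := hv a
  refine ⟨h.mem_of_cong (h.cong_star huv (h.cong_refl a)) h1, ?_, ?_⟩
  · exact h.mem_of_cong
      (h.cong_mul (h.cong_mul (h.cong_mul huv (h.cong_refl a)) (h.cong_inv huv))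
        (h.cong_refl a⁻¹)) h2
  · exact h.mem_of_cong (h.cong_circComm huv (h.cong_refl a)) h3

lemma one_mem_annStep : (1 : A) ∈ annStep S := by
  intro a
  refine ⟨?_, ?_, ?_⟩
  · rw [star_one_left]; exact h.one_mem
  · have e : (1 : A) * a * 1⁻¹ * a⁻¹ = 1 := by group
    rw [e]; exact h.one_mem
  · have e : circCommutator (1 : A) a = 1 := by
      unfold circCommutator
      rw [one_circ, sinv_one, circ_one, circ_sinv]
    rw [e]; exact h.one_mem

lemma subset_annStep : S ⊆ annStep S := by
  intro s hs
  exact h.annStep_congr (cong_one_iff'.2 hs) h.one_mem_annStep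

lemma sinv_cong_inv {x : A} (ha : ∀ a, star x a ∈ S) : cong S (sinv x) x⁻¹ := by
  have c1 : cong S (x * lam x (sinv x)) (x * sinv x) :=
    h.cong_mul (h.cong_refl x) (lam_cong_of_star (ha (sinv x)))
  rw [← circ_eq_mul_lam, circ_sinv] at c1
  have c2 : cong S (x * sinv x) (x * x⁻¹) := by
    rw [mul_inv_cancel]; exact h.cong_symm c1
  exact h.cong_of_mul_left x c2

lemma lam_sinv_cong {x : A} (ha : ∀ a, star x a ∈ S) (a : A) :
    cong S (lam (sinv x) a) a := by
  have c1 : cong S (lam x (lam (sinv x) a)) (lam (sinv x) a) :=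
    lam_cong_of_star (ha (lam (sinv x) a))
  rw [lam_lam_sinv] at c1
  exact h.cong_symm c1

lemma mul_mem_annStep {x y : A} (hx : x ∈ annStep S) (hy : y ∈ annStep S) :
    x * y ∈ annStep S := by
  have hax : ∀ a, star x a ∈ S := fun a => (hx a).1
  have hbx : ∀ a, x * a * x⁻¹ * a⁻¹ ∈ S := fun a => (hx a).2.1
  have hcx : ∀ a, circCommutator x a ∈ S := fun a => (hx a).2.2
  have hay : ∀ a, star y a ∈ S := fun a => (hy a).1
  have hby : ∀ a, y * a * y⁻¹ * a⁻¹ ∈ S := fun a => (hy a).2.1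
  have hcy : ∀ a, circCommutator y a ∈ S := fun a => (hy a).2.2
  have hdx : ∀ a, star a x ∈ S := h.star_right_mem hax hbx hcx
  have hdy : ∀ a, star a y ∈ S := h.star_right_mem hay hby hcy
  have HA : ∀ a, star (x * y) a ∈ S := by
    intro a
    -- x*y ≈ x∘y
    have hxy : cong S (x * y) (circ x y) := h.cong_symm (h.circ_cong_mul hax y)
    have c1 : cong S (star (x * y) a) (star (circ x y) a) :=
      h.cong_star hxy (h.cong_refl a)
    have c2 : cong S (lam (circ x y) a) a := by
      rw [lam_circ]
      exact h.cong_trans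
        (h.cong_lam (h.cong_refl x) (lam_cong_of_star (hay a)))
        (lam_cong_of_star (hax a))
    have c3 : cong S (star (circ x y) a) 1 := by
      rw [star_eq, cong]
      have e : lam (circ x y) a * a⁻¹ * 1⁻¹ = lam (circ x y) a * a⁻¹ := by group
      rw [e]; exact c2
    exact cong_one_iff'.1 (h.cong_trans c1 c3)
  have HB : ∀ a, (x * y) * a * (x * y)⁻¹ * a⁻¹ ∈ S := by
    intro a
    have c1 : cong S (x * (y * a * y⁻¹) * x⁻¹) a :=
      h.cong_trans
        (h.cong_mul (h.cong_mul (h.cong_refl x) (hby a)) (h.cong_refl x⁻¹))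
        (hbx a)
    have e : x * (y * a * y⁻¹) * x⁻¹ = (x * y) * a * (x * y)⁻¹ := by group
    rw [e] at c1
    exact c1
  have HD : ∀ a, star a (x * y) ∈ S := by
    intro a
    rw [star_eq]
    have c1 : cong S (lam a (x * y)) (x * y) := by
      rw [lam_mul]
      exact h.cong_mul (lam_cong_of_star (hdx a)) (lam_cong_of_star (hdy a))
    exact c1
  intro a
  exact ⟨HA a, HB a, h.circComm_mem HA HB HD a⟩

lemma inv_mem_annStep {x : A} (hx : x ∈ annStep S) : x⁻¹ ∈ annStep S := by
  have hax : ∀ a, star x a ∈ S := fun a => (hx a).1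
  have hbx : ∀ a, x * a * x⁻¹ * a⁻¹ ∈ S := fun a => (hx a).2.1
  have hcx : ∀ a, circCommutator x a ∈ S := fun a => (hx a).2.2
  have hdx : ∀ a, star a x ∈ S := h.star_right_mem hax hbx hcx
  have hsinv : cong S (sinv x) x⁻¹ := h.sinv_cong_inv hax
  have HA : ∀ a, star x⁻¹ a ∈ S := by
    intro a
    rw [star_eq]
    have c1 : cong S (lam x⁻¹ a) a :=
      h.cong_trans (h.cong_lam (h.cong_symm hsinv) (h.cong_refl a))
        (h.lam_sinv_cong hax a)
    exact c1
  have HB : ∀ a, x⁻¹ * a * x⁻¹⁻¹ * a⁻¹ ∈ S := by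
    intro a
    have c1 : cong S (x * (x⁻¹ * a * x⁻¹⁻¹) * x⁻¹) (x⁻¹ * a * x⁻¹⁻¹) := hbx _
    have e : x * (x⁻¹ * a * x⁻¹⁻¹) * x⁻¹ = a := by group
    rw [e] at c1
    exact h.cong_symm c1
  have HD : ∀ a, star a x⁻¹ ∈ S := by
    intro a
    rw [star_eq, lam_inv]
    exact h.cong_inv (lam_cong_of_star (hdx a))
  intro a
  exact ⟨HA a, HB a, h.circComm_mem HA HB HD a⟩

theorem annStep_isIdeal : IsIdeal (annStep S) where
  one_mem := h.one_mem_annStep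
  mul_mem := fun hx hy => h.mul_mem_annStep hx hy
  inv_mem := fun hx => h.inv_mem_annStep hx
  conj_mem := by
    intro a x hx
    have hbx : x * a * x⁻¹ * a⁻¹ ∈ S := (hx a).2.1
    have c1 : cong S (a * x * a⁻¹) x := by
      rw [cong]
      have e : a * x * a⁻¹ * x⁻¹ = (x * a * x⁻¹ * a⁻¹)⁻¹ := by group
      rw [e]
      exact h.inv_mem hbx
    exact h.annStep_congr c1 hx
  lam_mem := by
    intro a x hx
    have hax : ∀ b, star x b ∈ S := fun b => (hx b).1
    have hbx : ∀ b, x * b * x⁻¹ * b⁻¹ ∈ S := fun b => (hx b).2.1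
    have hcx : ∀ b, circCommutator x b ∈ S := fun b => (hx b).2.2
    have c1 : cong S (lam a x) x :=
      lam_cong_of_star (h.star_right_mem hax hbx hcx a)
    exact h.annStep_congr c1 hx
  star_mem := fun hx a => h.subset_annStep ((hx a).1)

end IsIdeal

/-- Bundle an ideal as a subgroup. -/
def IsIdeal.toSubgroup {S : Set A} (h : IsIdeal S) : Subgroup A where
  carrier := S
  one_mem' := h.one_mem
  mul_mem' := h.mul_mem
  inv_mem' := h.inv_mem

lemma isIdeal_singleton : IsIdeal ({1} : Set A) := by
  constructor
  · rfl
  · intro x y hx hy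
    rw [Set.mem_singleton_iff] at *
    rw [hx, hy, mul_one]
  · intro x hx
    rw [Set.mem_singleton_iff] at *
    rw [hx, inv_one]
  · intro a x hx
    rw [Set.mem_singleton_iff] at *
    rw [hx]
    group
  · intro a x hx
    rw [Set.mem_singleton_iff] at *
    rw [hx, lam_one_right]
  · intro x hx a
    rw [Set.mem_singleton_iff] at *
    rw [hx, star_one_left]

lemma isIdeal_annSeries : ∀ n : ℕ, IsIdeal (annSeries (A := A) n)
  | 0 => isIdeal_singleton
  | n + 1 => (isIdeal_annSeries n).annStep_isIdeal

end Aux2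


section Aux3

lemma gamma_subset_iff (j i : ℕ) :
    ((gammaSeries (A := A) i : Set A) ⊆ annSeries (j + 1)) ↔
      ((gammaSeries (A := A) (i + 1) : Set A) ⊆ annSeries j) := by
  have hj := isIdeal_annSeries (A := A) j
  have hstep : annSeries (A := A) (j + 1) = annStep (annSeries j) := rfl
  constructor
  · intro hG
    rw [hstep] at hG
    have hle : gammaSeries (A := A) (i + 1) ≤ hj.toSubgroup := by
      rw [gammaSeries]
      rw [Subgroup.closure_le]
      rintro z ((⟨x, hxG, a, rfl⟩ | ⟨a, x, hxG, rfl⟩) | ⟨a, x, hxG, rfl⟩)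
      · exact (hG hxG a).1
      · have hx := hG hxG
        exact hj.star_right_mem (fun b => (hx b).1) (fun b => (hx b).2.1)
          (fun b => (hx b).2.2) a
      · have hx := hG hxG
        show a * x * a⁻¹ * x⁻¹ ∈ annSeries j
        have e : a * x * a⁻¹ * x⁻¹ = (x * a * x⁻¹ * a⁻¹)⁻¹ := by group
        rw [e]
        exact hj.inv_mem ((hx a).2.1)
    exact fun z hz => hle hz
  · intro hG
    rw [hstep]
    intro x hxG
    have HA : ∀ a, star x a ∈ annSeries (A := A) j := by
      intro a
      refine hG ?_
      exact Subgroup.subset_closure (Or.inl (Or.inl ⟨x, hxG, a, rfl⟩))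
    have HD : ∀ a, star a x ∈ annSeries (A := A) j := by
      intro a
      refine hG ?_
      exact Subgroup.subset_closure (Or.inl (Or.inr ⟨a, x, hxG, rfl⟩))
    have HB : ∀ a, x * a * x⁻¹ * a⁻¹ ∈ annSeries (A := A) j := by
      intro a
      have hmem : a * x * a⁻¹ * x⁻¹ ∈ gammaSeries (A := A) (i + 1) :=
        Subgroup.subset_closure (Or.inr ⟨a, x, hxG, rfl⟩)
      have hinv : (a * x * a⁻¹ * x⁻¹)⁻¹ ∈ gammaSeries (A := A) (i + 1) :=
        (gammaSeries (A := A) (i + 1)).inv_mem hmem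
      have e : (a * x * a⁻¹ * x⁻¹)⁻¹ = x * a * x⁻¹ * a⁻¹ := by group
      rw [e] at hinv
      exact hG hinv
    intro a
    exact ⟨HA a, HB a, hj.circComm_mem HA HB HD a⟩

lemma gamma_subset_iterate :
    ∀ (j i : ℕ), ((gammaSeries (A := A) i : Set A) ⊆ annSeries j) ↔
      ((gammaSeries (A := A) (i + j) : Set A) ⊆ annSeries 0)
  | 0, i => Iff.rfl
  | j + 1, i => by
    rw [gamma_subset_iff j i, gamma_subset_iterate j (i + 1)]
    have e : i + 1 + j = i + (j + 1) := by omega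
    rw [e]

end Aux3


/-- Ann_(n-1)(A) = A iff Gamma_n(A) = 1; here Ann_n = annSeries n, Gamma_(n+1) = gammaSeries n. -/
theorem annSeries_univ_iff_gamma_bot {A : Type*} [SkewBrace A] :
    ∀ n : ℕ, annSeries (A := A) n = Set.univ ↔ gammaSeries (A := A) n = ⊥ := by
  intro n
  have h1 : (annSeries (A := A) n = Set.univ) ↔
      ((gammaSeries (A := A) 0 : Set A) ⊆ annSeries n) := by
    rw [show gammaSeries (A := A) 0 = ⊤ from rfl, Subgroup.coe_top]
    constructor
    · intro h
      rw [h]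
    · intro h
      exact Set.univ_subset_iff.1 h
  have h2 := gamma_subset_iterate (A := A) n 0
  rw [Nat.zero_add] at h2
  have h3 : ((gammaSeries (A := A) n : Set A) ⊆ annSeries 0) ↔
      gammaSeries (A := A) n = ⊥ := by
    rw [show annSeries (A := A) 0 = {1} from rfl]
    constructor
    · intro h
      rw [Subgroup.eq_bot_iff_forall]
      intro x hx
      exact h hx
    · intro h
      rw [h]
      intro x hx
      simpa using hx
  rw [h1, h2, h3]
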